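/- arXiv:2302.00949 — 4 statements merged into one kernel-verified Lean document; each statement's English description precedes it below -/
import Mathlib

section
/- Let c, α₁ be real constants with c ≠ 0 and let C : ℝ → ℝ be differentiable with C(t) ≠ 0 for all t. On ℝ⁴ with coordinates (t,x,y,z), define the Bianchi I metric g = diag(−C(t)², C(t)²e^{−2t/c}, C(t)²e^{−2α₁t/c}, C(t)²). Then the vector field X₁ = (c, x, α₁y, 0) (i.e. X₁ = c∂_t + x∂_x + α₁y∂_y) is a conformal Killing vector of g with conformal factor ψ(t,x,y,z) = c·C′(t)/C(t): for all μ,ν ∈ {0,1,2,3} and all points p, Σ_λ [ξ^λ(p)·∂_λ g_{μν}(p) + g_{λν}(p)·∂_μ ξ^λ(p) + g_{μλ}(p)·∂_ν ξ^λ(p)] = 2ψ(p)·g_{μν}(p). -/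
noncomputable section

/-- Partial derivative of `f` in the `μ`-th coordinate direction at `p`. -/
def pd (μ : Fin 4) (f : (Fin 4 → ℝ) → ℝ) (p : Fin 4 → ℝ) : ℝ :=
  fderiv ℝ f p (Pi.single μ 1)

/-- `ξ` is a conformal Killing vector of the metric `g` with conformal factor `ψ`:
`Σ_λ [ξ^λ ∂_λ g_{μν} + g_{λν} ∂_μ ξ^λ + g_{μλ} ∂_ν ξ^λ] = 2 ψ g_{μν}`. -/
def IsCKV (g : (Fin 4 → ℝ) → Matrix (Fin 4) (Fin 4) ℝ)
    (ξ : (Fin 4 → ℝ) → Fin 4 → ℝ) (ψ : (Fin 4 → ℝ) → ℝ) : Prop :=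
  ∀ (μ ν : Fin 4) (p : Fin 4 → ℝ),
    (∑ l : Fin 4, (ξ p l * pd l (fun q => g q μ ν) p
      + g p l ν * pd μ (fun q => ξ q l) p
      + g p μ l * pd ν (fun q => ξ q l) p)) = 2 * ψ p * g p μ ν

/-!
The metric is conformal to `ĝ = diag(-1, e^{-2t/c}, e^{-2α₁t/c}, 1)` with factor `C(t)²`.
`X₁` is affine with constant diagonal Jacobian `diag(0, 1, α₁, 0)`, so on a diagonal metric the
CKV equations reduce to the diagonal ones `X₁(g_μμ) + 2 a_μ g_μμ = 2ψ g_μμ`. For `ĝ` these hold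
with `ψ = 0` because `c · (-2a/c) + 2a = 0`, and the factor `C²` contributes
`X₁(C²)/C² = 2c C'/C`.
-/

open Matrix

theorem pd_const (l : Fin 4) (a : ℝ) (p : Fin 4 → ℝ) : pd l (fun _ => a) p = 0 := by
  simp [pd]

theorem pd_affine (b a : ℝ) (i l : Fin 4) (p : Fin 4 → ℝ) :
    pd l (fun q => b + a * q i) p = if l = i then a else 0 := by
  have h : HasFDerivAt (fun q : Fin 4 → ℝ => b + a * q i)
      (a • ContinuousLinearMap.proj (R := ℝ) (φ := fun _ : Fin 4 => ℝ) i) p :=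
    ((hasFDerivAt_apply i p).const_smul a).const_add b
  rw [pd, h.fderiv]
  simp [Pi.single_apply, eq_comm]

theorem pd_comp_apply_zero {F : ℝ → ℝ} {p : Fin 4 → ℝ} (hF : DifferentiableAt ℝ F (p 0))
    (l : Fin 4) : pd l (fun q => F (q 0)) p = if l = 0 then deriv F (p 0) else 0 := by
  have h : HasFDerivAt (fun q : Fin 4 → ℝ => F (q 0)) (deriv F (p 0) • .proj 0) p :=
    hF.hasDerivAt.comp_hasFDerivAt p (hasFDerivAt_apply (𝕜 := ℝ) 0 p)
  rw [pd, h.fderiv]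
  simp [Pi.single_apply, eq_comm]

theorem isCKV_diagonal {d ξ : (Fin 4 → ℝ) → Fin 4 → ℝ} {ψ : (Fin 4 → ℝ) → ℝ} (a : Fin 4 → ℝ)
    (hξ : ∀ μ l p, pd μ (fun q => ξ q l) p = if μ = l then a l else 0)
    (hd : ∀ μ p, ∑ l, ξ p l * pd l (fun q => d q μ) p + 2 * a μ * d p μ = 2 * ψ p * d p μ) :
    IsCKV (fun p => diagonal (d p)) ξ ψ := by
  intro μ ν p
  rcases eq_or_ne μ ν with rfl | hμν
  · simp only [diagonal_apply, hξ, Finset.sum_add_distrib, mul_ite, ite_mul, zero_mul, mul_zero,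
      Finset.sum_ite_eq, Finset.mem_univ, if_true]
    linear_combination hd μ p
  · simp [pd_const, hξ, Finset.sum_add_distrib, diagonal_apply_ne _ hμν]

theorem isCKV_conformal_diagonal_time {C : ℝ → ℝ} (hC : Differentiable ℝ C)
    {w : Fin 4 → ℝ → ℝ} (hw : ∀ μ, Differentiable ℝ (w μ)) {a b : Fin 4 → ℝ} (ha : a 0 = 0)
    (hkill : ∀ μ t, b 0 * deriv (w μ) t + 2 * a μ * w μ t = 0) :
    IsCKV (fun p => diagonal fun μ => C (p 0) ^ 2 * w μ (p 0)) (fun p l => b l + a l * p l)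
      (fun p => b 0 * deriv C (p 0) / C (p 0)) := by
  refine isCKV_diagonal a (fun μ l p => pd_affine (b l) (a l) l μ p) fun μ p => ?_
  have hCw : Differentiable ℝ fun t => C t ^ 2 * w μ t := (hC.pow 2).mul (hw μ)
  simp only [pd_comp_apply_zero (hCw _), mul_ite, mul_zero, Finset.sum_ite_eq', Finset.mem_univ,
    if_true, ha, zero_mul, add_zero]
  set t := p 0
  have hderiv : deriv (fun t => C t ^ 2 * w μ t) t
      = 2 * C t * deriv C t * w μ t + C t ^ 2 * deriv (w μ) t := by
    rw [(((hC t).hasDerivAt.fun_pow 2).fun_mul (hw μ t).hasDerivAt).deriv]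
    ring
  have hquot : b 0 * deriv C t / C t * C t ^ 2 = b 0 * deriv C t * C t := by
    -- where `C t = 0` the junk value `x / 0 = 0` is harmless: both sides vanish
    rcases eq_or_ne (C t) 0 with h | h
    · simp [h]
    · field_simp
  rw [hderiv]
  linear_combination C t ^ 2 * hkill μ t - 2 * w μ t * hquot

theorem killing_condition_exp {c : ℝ} (hc : c ≠ 0) (a t : ℝ) :
    c * deriv (fun s => Real.exp (-2 * a * s / c)) t + 2 * a * Real.exp (-2 * a * t / c) = 0 := by
  have h : HasDerivAt (fun s => -2 * a * s / c) (-2 * a / c) t := by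
    simpa using ((hasDerivAt_id t).const_mul (-2 * a)).div_const c
  rw [h.exp.deriv]
  field_simp
  ring

theorem bianchiI_X1_is_CKV_general (c α₁ : ℝ) (hc : c ≠ 0)
    (C : ℝ → ℝ) (hC : Differentiable ℝ C)
    (g : (Fin 4 → ℝ) → Matrix (Fin 4) (Fin 4) ℝ)
    (hg : g = fun p => Matrix.diagonal
      ![-(C (p 0)) ^ 2,
        (C (p 0)) ^ 2 * Real.exp (-2 * p 0 / c),
        (C (p 0)) ^ 2 * Real.exp (-2 * α₁ * p 0 / c),
        (C (p 0)) ^ 2])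
    (ξ : (Fin 4 → ℝ) → Fin 4 → ℝ)
    (hξ : ξ = fun p => ![c, p 1, α₁ * p 2, 0])
    (ψ : (Fin 4 → ℝ) → ℝ)
    (hψ : ψ = fun p => c * deriv C (p 0) / C (p 0)) :
    IsCKV g ξ ψ := by
  subst hg hξ hψ
  set w : Fin 4 → ℝ → ℝ :=
    ![fun _ => -1, fun t => Real.exp (-2 * t / c), fun t => Real.exp (-2 * α₁ * t / c), fun _ => 1]
  have hw : ∀ μ, Differentiable ℝ (w μ) := by
    intro μ
    fin_cases μ <;> simp [w] <;> fun_prop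
  have hkill : ∀ μ t, c * deriv (w μ) t + 2 * ![0, 1, α₁, 0] μ * w μ t = 0 := by
    intro μ t
    fin_cases μ
    · simp [w]
    · simpa [w] using killing_condition_exp hc 1 t
    · simpa [w] using killing_condition_exp hc α₁ t
    · simp [w]
  convert isCKV_conformal_diagonal_time (b := ![c, 0, 0, 0]) hC hw rfl hkill using 2
  · congr 1
    ext μ
    fin_cases μ <;> simp [w]
  · ext l
    fin_cases l <;> simp
  · rfl

/-- the vector field `X₁ = c∂_t + x∂_x + α₁ y∂_y` is a conformal Killing
vector of the Bianchi I metric `diag(−C², C²e^{−2t/c}, C²e^{−2α₁t/c}, C²)` with conformal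
factor `ψ = c C′(t)/C(t)`. -/
theorem bianchiI_X1_is_CKV (c α₁ : ℝ) (hc : c ≠ 0)
    (C : ℝ → ℝ) (hC : Differentiable ℝ C) (hC0 : ∀ t, C t ≠ 0)
    (g : (Fin 4 → ℝ) → Matrix (Fin 4) (Fin 4) ℝ)
    (hg : g = fun p => Matrix.diagonal
      ![-(C (p 0)) ^ 2,
        (C (p 0)) ^ 2 * Real.exp (-2 * p 0 / c),
        (C (p 0)) ^ 2 * Real.exp (-2 * α₁ * p 0 / c),
        (C (p 0)) ^ 2])
    (ξ : (Fin 4 → ℝ) → Fin 4 → ℝ)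
    (hξ : ξ = fun p => ![c, p 1, α₁ * p 2, 0])
    (ψ : (Fin 4 → ℝ) → ℝ)
    (hψ : ψ = fun p => c * deriv C (p 0) / C (p 0)) :
    IsCKV g ξ ψ :=
  bianchiI_X1_is_CKV_general c α₁ hc C hC g hg ξ hξ ψ hψ
end
end

section
/- Let c, α₁ be real constants with c ≠ 0, let C : ℝ → ℝ be three times differentiable with C(t) ≠ 0 for all t, and let U : ℝ³ → ℝ be differentiable. On ℝ⁴ with coordinates (t,x,y,z), consider the Bianchi I metric diag(−C², C²e^{−2t/c}, C²e^{−2α₁t/c}, C²), the conformal Killing vector ξ = (c, x, α₁y, 0) with conformal factor ψ(t) = c·C′(t)/C(t), and the potential V(t,x,y,z) = (c·C″(t) − (α₁+1)·C′(t))/(c·C(t)³) + C(t)^{−2}·U(x·e^{−t/c}, y·e^{−α₁t/c}, z). Then the Lie/Noether symmetry constraint of the Klein–Gordon equation holds identically: for all (t,x,y,z), c·∂_tV + x·∂_xV + α₁y·∂_yV + 2ψ·V + Δψ = 0, where Δψ(t) = −C(t)^{−2}·[ψ″(t) + (2C′(t)/C(t) − (1+α₁)/c)·ψ′(t)] is the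 Laplace–Beltrami operator of the metric applied to ψ. -/
/-!
The vector field `ξ = c ∂_t + x ∂_x + α₁ y ∂_y` is the velocity of the flow
`s ↦ (t + c s, x eˢ, y e^{α₁ s}, z)`, along which the three arguments of `U` are constant.
Hence `ξ` sees `V` only through `t`: on a flow line `V` is the function
`A(t) + u C(t)⁻²` of `t` alone, with `A = (cC″ − (α₁+1)C′)/(cC³)` and `u` the constant value of `U`,
and `ξ V = c ∂_t (A + u C⁻²)`. The term `c ∂_t (u C⁻²) = −2cuC′/C³` cancels against `2ψ u C⁻²`, and
what remains, `c A′ + 2ψA + Δψ = 0`, is an identity between `C, C′, C″, C‴`.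
-/

noncomputable section

theorem sum_mul_pd_eq_fderiv (f : (Fin 4 → ℝ) → ℝ) (p v : Fin 4 → ℝ) :
    ∑ μ, v μ * pd μ f p = fderiv ℝ f p v := by
  conv_rhs => rw [pi_eq_sum_univ' v]
  simp [pd, map_sum]

theorem hasDerivAt_deriv_deriv {C : ℝ → ℝ} (hC : ContDiff ℝ 3 C) (t : ℝ) :
    HasDerivAt C (deriv C t) t ∧ HasDerivAt (deriv C) (deriv (deriv C) t) t ∧
      HasDerivAt (deriv (deriv C)) (deriv (deriv (deriv C)) t) t :=
  ⟨(hC.differentiable (by norm_num) t).hasDerivAt,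
    ((hC.of_le (by norm_num)).differentiable_deriv_two t).hasDerivAt,
    ((hC.deriv' (n := 2)).differentiable_deriv_two t).hasDerivAt⟩

namespace BianchiI

variable (c α₁ : ℝ) (C : ℝ → ℝ)

def conformalFactor (t : ℝ) : ℝ := c * deriv C t / C t

def timeLaplacian (f : ℝ → ℝ) (t : ℝ) : ℝ :=
  -((C t) ^ 2)⁻¹ * (deriv (deriv f) t + (2 * deriv C t / C t - (1 + α₁) / c) * deriv f t)

def timePotential (t : ℝ) : ℝ :=
  (c * deriv (deriv C) t - (α₁ + 1) * deriv C t) / (c * C t ^ 3)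

def reducedPotential (u t : ℝ) : ℝ := timePotential c α₁ C t + (C t ^ 2)⁻¹ * u

def invariantCoords (p : Fin 4 → ℝ) : Fin 3 → ℝ :=
  ![p 1 * Real.exp (-(p 0) / c), p 2 * Real.exp (-(α₁ * p 0) / c), p 3]

def potential (U : (Fin 3 → ℝ) → ℝ) (p : Fin 4 → ℝ) : ℝ :=
  reducedPotential c α₁ C (U (invariantCoords c α₁ p)) (p 0)

def ckvFlow (p : Fin 4 → ℝ) (s : ℝ) : Fin 4 → ℝ :=
  ![p 0 + c * s, p 1 * Real.exp s, p 2 * Real.exp (α₁ * s), p 3]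

variable {c α₁ C}

theorem hasDerivAt_conformalFactor (hC : ContDiff ℝ 2 C) {t : ℝ} (hCt : C t ≠ 0) :
    HasDerivAt (conformalFactor c C)
      (c * (deriv (deriv C) t * C t - deriv C t ^ 2) / C t ^ 2) t := by
  have hC₁ : HasDerivAt C (deriv C t) t := (hC.differentiable two_ne_zero t).hasDerivAt
  have hC₂ : HasDerivAt (deriv C) (deriv (deriv C) t) t :=
    (hC.differentiable_deriv_two t).hasDerivAt
  exact ((hC₂.const_mul c).div hC₁ hCt).congr_deriv (by ring)

theorem hasDerivAt_deriv_conformalFactor (hC : ContDiff ℝ 3 C) (hC0 : ∀ t, C t ≠ 0) (t : ℝ) :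
    HasDerivAt (deriv (conformalFactor c C))
      (c * (deriv (deriv (deriv C)) t * C t ^ 2 - 3 * C t * deriv C t * deriv (deriv C) t
        + 2 * deriv C t ^ 3) / C t ^ 3) t := by
  have hψ' : deriv (conformalFactor c C) =
      fun t => c * (deriv (deriv C) t * C t - deriv C t ^ 2) / C t ^ 2 :=
    funext fun t => (hasDerivAt_conformalFactor (hC.of_le (by norm_num)) (hC0 t)).deriv
  obtain ⟨hC₁, hC₂, hC₃⟩ := hasDerivAt_deriv_deriv hC t
  rw [hψ']
  refine ((((hC₃.fun_mul hC₁).fun_sub (hC₂.fun_pow 2)).const_mul c).fun_div (hC₁.fun_pow 2)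
    (pow_ne_zero 2 (hC0 t))).congr_deriv ?_
  field_simp [hC0 t]
  ring

theorem hasDerivAt_timePotential (hc : c ≠ 0) (hC : ContDiff ℝ 3 C) {t : ℝ} (hCt : C t ≠ 0) :
    HasDerivAt (timePotential c α₁ C)
      (((c * deriv (deriv (deriv C)) t - (α₁ + 1) * deriv (deriv C) t) * C t
        - 3 * deriv C t * (c * deriv (deriv C) t - (α₁ + 1) * deriv C t)) / (c * C t ^ 4)) t := by
  obtain ⟨hC₁, hC₂, hC₃⟩ := hasDerivAt_deriv_deriv hC t
  refine (((hC₃.const_mul c).fun_sub (hC₂.const_mul (α₁ + 1))).fun_div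
    ((hC₁.fun_pow 3).const_mul c)
    (mul_ne_zero hc (pow_ne_zero 3 hCt))).congr_deriv ?_
  field_simp
  ring

theorem differentiable_timePotential (hc : c ≠ 0) (hC : ContDiff ℝ 3 C) (hC0 : ∀ t, C t ≠ 0) :
    Differentiable ℝ (timePotential c α₁ C) := fun t =>
  (hasDerivAt_timePotential hc hC (hC0 t)).differentiableAt

theorem timePotential_constraint (hc : c ≠ 0) (hC : ContDiff ℝ 3 C)
    (hC0 : ∀ t, C t ≠ 0) (t : ℝ) :
    c * deriv (timePotential c α₁ C) t + 2 * conformalFactor c C t * timePotential c α₁ C t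
      + timeLaplacian c α₁ C (conformalFactor c C) t = 0 := by
  rw [timeLaplacian, (hasDerivAt_timePotential hc hC (hC0 t)).deriv,
    (hasDerivAt_deriv_conformalFactor hC hC0 t).deriv,
    (hasDerivAt_conformalFactor (hC.of_le (by norm_num)) (hC0 t)).deriv,
    conformalFactor, timePotential]
  field_simp [hC0 t]
  ring

theorem reducedPotential_constraint (hc : c ≠ 0) (hC : ContDiff ℝ 3 C)
    (hC0 : ∀ t, C t ≠ 0) (u t : ℝ) :
    c * deriv (reducedPotential c α₁ C u) t
      + 2 * conformalFactor c C t * reducedPotential c α₁ C u t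
      + timeLaplacian c α₁ C (conformalFactor c C) t = 0 := by
  have hT := hasDerivAt_timePotential (α₁ := α₁) hc hC (hC0 t)
  have hCd := (hasDerivAt_deriv_deriv hC t).1
  have hinv : HasDerivAt (fun τ => (C τ ^ 2)⁻¹ * u) (-(2 * deriv C t / C t ^ 3) * u) t :=
    (((hCd.fun_pow 2).inv (pow_ne_zero 2 (hC0 t))).mul_const u).congr_deriv
      (by field_simp [hC0 t]; ring)
  have hR : HasDerivAt (reducedPotential c α₁ C u) _ t := hT.add hinv
  have hTc := timePotential_constraint (α₁ := α₁) hc hC hC0 t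
  have hscale : -(2 * deriv C t / C t ^ 3) * c + 2 * conformalFactor c C t * (C t ^ 2)⁻¹ = 0 := by
    rw [conformalFactor]; field_simp [hC0 t]; ring
  rw [hR.deriv, reducedPotential]
  rw [hT.deriv] at hTc
  linear_combination hTc + u * hscale

theorem ckvFlow_zero (p : Fin 4 → ℝ) : ckvFlow c α₁ p 0 = p := by
  ext i; fin_cases i <;> simp [ckvFlow]

theorem hasDerivAt_ckvFlow (p : Fin 4 → ℝ) :
    HasDerivAt (ckvFlow c α₁ p) ![c, p 1, α₁ * p 2, 0] 0 := by
  rw [hasDerivAt_pi]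
  intro i
  fin_cases i <;> simp only [ckvFlow, Fin.isValue, Fin.zero_eta, Fin.mk_one, Fin.reduceFinMk,
    Matrix.cons_val_zero, Matrix.cons_val_one, Matrix.cons_val]
  · simpa using ((hasDerivAt_id (0 : ℝ)).const_mul c).const_add (p 0)
  · simpa using (Real.hasDerivAt_exp 0).const_mul (p 1)
  · simpa [mul_comm] using (((hasDerivAt_id (0 : ℝ)).const_mul α₁).exp).const_mul (p 2)
  · exact hasDerivAt_const _ _

theorem invariantCoords_ckvFlow (hc : c ≠ 0) (p : Fin 4 → ℝ) (s : ℝ) :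
    invariantCoords c α₁ (ckvFlow c α₁ p s) = invariantCoords c α₁ p := by
  ext i; fin_cases i
  · show p 1 * Real.exp s * Real.exp (-(p 0 + c * s) / c) = p 1 * Real.exp (-(p 0) / c)
    rw [mul_assoc, ← Real.exp_add]
    congr 2; field_simp; ring
  · show p 2 * Real.exp (α₁ * s) * Real.exp (-(α₁ * (p 0 + c * s)) / c)
      = p 2 * Real.exp (-(α₁ * p 0) / c)
    rw [mul_assoc, ← Real.exp_add]
    congr 2; field_simp; ring
  · rfl

theorem potential_ckvFlow (hc : c ≠ 0) (U : (Fin 3 → ℝ) → ℝ) (p : Fin 4 → ℝ) (s : ℝ) :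
    potential c α₁ C U (ckvFlow c α₁ p s)
      = reducedPotential c α₁ C (U (invariantCoords c α₁ p)) (p 0 + c * s) := by
  rw [potential, invariantCoords_ckvFlow hc]
  rfl

theorem differentiable_invariantCoords : Differentiable ℝ (invariantCoords c α₁) := by
  rw [differentiable_pi]
  intro i
  fin_cases i <;> simp only [invariantCoords, Fin.isValue, Fin.zero_eta, Fin.mk_one,
    Fin.reduceFinMk, Matrix.cons_val_zero, Matrix.cons_val_one, Matrix.cons_val] <;> fun_prop

theorem differentiable_reducedPotential (hc : c ≠ 0) (hC : ContDiff ℝ 3 C)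
    (hC0 : ∀ t, C t ≠ 0) (u : ℝ) : Differentiable ℝ (reducedPotential c α₁ C u) := by
  have := differentiable_timePotential (α₁ := α₁) hc hC hC0
  have := hC.differentiable (by norm_num)
  unfold reducedPotential
  fun_prop (disch := simp [hC0])

theorem differentiable_potential (hc : c ≠ 0) (hC : ContDiff ℝ 3 C) (hC0 : ∀ t, C t ≠ 0)
    {U : (Fin 3 → ℝ) → ℝ} (hU : Differentiable ℝ U) : Differentiable ℝ (potential c α₁ C U) := by
  have := differentiable_timePotential (α₁ := α₁) hc hC hC0
  have := hC.differentiable (by norm_num)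
  have := differentiable_invariantCoords (c := c) (α₁ := α₁)
  unfold potential reducedPotential
  fun_prop (disch := simp [hC0])

theorem fderiv_potential_ckv (hc : c ≠ 0) (hC : ContDiff ℝ 3 C) (hC0 : ∀ t, C t ≠ 0)
    {U : (Fin 3 → ℝ) → ℝ} (hU : Differentiable ℝ U) (p : Fin 4 → ℝ) :
    fderiv ℝ (potential c α₁ C U) p ![c, p 1, α₁ * p 2, 0]
      = c * deriv (reducedPotential c α₁ C (U (invariantCoords c α₁ p))) (p 0) := by
  have hchain : HasDerivAt (potential c α₁ C U ∘ ckvFlow c α₁ p)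
      (fderiv ℝ (potential c α₁ C U) p ![c, p 1, α₁ * p 2, 0]) 0 :=
    (differentiable_potential hc hC hC0 hU p).hasFDerivAt.comp_hasDerivAt_of_eq 0
      (hasDerivAt_ckvFlow p) (ckvFlow_zero p).symm
  have hline : HasDerivAt (fun s => p 0 + c * s) c 0 :=
    hasDerivAt_pi.mp (hasDerivAt_ckvFlow (α₁ := α₁) p) 0
  have hreduced : HasDerivAt (potential c α₁ C U ∘ ckvFlow c α₁ p)
      (c * deriv (reducedPotential c α₁ C (U (invariantCoords c α₁ p))) (p 0)) 0 := by
    rw [show potential c α₁ C U ∘ ckvFlow c α₁ p = _ from funext (potential_ckvFlow hc U p)]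
    have hg := (differentiable_reducedPotential (α₁ := α₁) hc hC hC0 (U (invariantCoords c α₁ p))
      (p 0 + c * 0)).hasDerivAt.comp 0 hline
    simpa [mul_comm, Function.comp_def] using hg
  exact hchain.unique hreduced

end BianchiI

/-- for the Bianchi I metric `diag(−C², C²e^{−2t/c}, C²e^{−2α₁t/c}, C²)`,
the CKV `ξ = c∂_t + x∂_x + α₁y∂_y` with conformal factor `ψ = cC′/C` and the potential
`V = (cC″ − (α₁+1)C′)/(cC³) + C^{−2}·U(xe^{−t/c}, ye^{−α₁t/c}, z)`, the Lie/Noether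
symmetry constraint `ξ^ν ∂_ν V + 2ψV + Δψ = 0` of the Klein-Gordon equation holds. -/
theorem bianchiI_X1_potential_constraint (c α₁ : ℝ) (hc : c ≠ 0)
    (C : ℝ → ℝ) (hC : ContDiff ℝ 3 C) (hC0 : ∀ t, C t ≠ 0)
    (U : (Fin 3 → ℝ) → ℝ) (hU : Differentiable ℝ U)
    (ψ : ℝ → ℝ) (hψ : ψ = fun t => c * deriv C t / C t)
    (Δψ : ℝ → ℝ)
    (hΔψ : Δψ = fun t => -((C t) ^ 2)⁻¹ *
      (deriv (deriv ψ) t + (2 * deriv C t / C t - (1 + α₁) / c) * deriv ψ t))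
    (V : (Fin 4 → ℝ) → ℝ)
    (hV : V = fun p =>
      (c * deriv (deriv C) (p 0) - (α₁ + 1) * deriv C (p 0)) / (c * (C (p 0)) ^ 3)
      + ((C (p 0)) ^ 2)⁻¹ *
          U ![p 1 * Real.exp (-(p 0) / c), p 2 * Real.exp (-(α₁ * p 0) / c), p 3]) :
    ∀ p : Fin 4 → ℝ,
      c * pd 0 V p + p 1 * pd 1 V p + α₁ * p 2 * pd 2 V p
        + 2 * ψ (p 0) * V p + Δψ (p 0) = 0 := by
  obtain rfl : ψ = BianchiI.conformalFactor c C := hψ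
  obtain rfl : Δψ = BianchiI.timeLaplacian c α₁ C (BianchiI.conformalFactor c C) := hΔψ
  obtain rfl : V = BianchiI.potential c α₁ C U := hV
  intro p
  have hflow := BianchiI.fderiv_potential_ckv (α₁ := α₁) hc hC hC0 hU p
  rw [← sum_mul_pd_eq_fderiv, Fin.sum_univ_four] at hflow
  simp only [Fin.isValue, Matrix.cons_val_zero, Matrix.cons_val_one, Matrix.cons_val, zero_mul,
    add_zero] at hflow
  have htime := BianchiI.reducedPotential_constraint (α₁ := α₁) hc hC hC0
    (U (BianchiI.invariantCoords c α₁ p)) (p 0)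
  have hpotential : BianchiI.potential c α₁ C U p
      = BianchiI.reducedPotential c α₁ C (U (BianchiI.invariantCoords c α₁ p)) (p 0) := rfl
  linear_combination hflow + htime + 2 * BianchiI.conformalFactor c C (p 0) * hpotential
end
end

section
/- Let c, α₁, α, β, γ be real constants with c ≠ 0 and α₁ ≠ 0, let C : ℝ → ℝ be three times differentiable with C(t) ≠ 0 for all t, and let U : ℝ³ → ℝ be differentiable. On ℝ⁴ with coordinates (t,x,y,z), consider the Bianchi I metric diag(−C², C²e^{−2t/c}, C²e^{−2α₁t/c}, C²), the conformal Killing vector ξ = (c, x + α, α₁y + β, γ) (i.e. X₁ + α∂_x + β∂_y + γ∂_z) with conformal factor ψ(t) = c·C′(t)/C(t), and the potential V(t,x,y,z) = (c·C″(t) − (α₁+1)·C′(t))/(c·C(t)³) + C(t)^{−2}·U((x+α)·e^{−t/c}, (y + β/α₁)·e^{−α₁t/c}, z − (γ/c)·t). Then the symmetry constraint holds identically: for all (t,x,y,z), c·∂_tV + (x+α)·∂_xV + (α₁y+β)·∂_yV + γ·∂_zV + 2ψ·V + Δψ = 0, where Δψ(t) = −C(t)^{−2}·[ψ″(t) + (2C′(t)/C(t)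 − (1+α₁)/c)·ψ′(t)]. -/
/-!
The arguments `w = (w₁, w₂, w₃)` of `U` are first integrals of `ξ`: each is annihilated by `ξ`, so
`ξ(U ∘ w) = 0` by the chain rule. As `ξ^t = c` is constant, `ξ` acts on functions of `t` as
`c d/dt`, and the constraint splits into the coefficient of `U`, `c (C⁻²)′ + 2ψC⁻² = 0`, and the
identity `cF′ + 2ψF + Δψ = 0` for the time part `F = (cC″ − (α₁+1)C′)/(cC³)` of `V`; both are
direct computations. The `ξ`-derivative at `p` is computed as the line derivative of `V` in the
direction `ξ(p)`.
-/

noncomputable section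

open Real

theorem ContinuousLinearMap.sum_smul_apply_single {ι F : Type*} [Fintype ι] [DecidableEq ι]
    [NormedAddCommGroup F] [NormedSpace ℝ F] (L : (ι → ℝ) →L[ℝ] F) (v : ι → ℝ) :
    ∑ i, v i • L (Pi.single i 1) = L v := by
  conv_rhs => rw [← Finset.univ_sum_single v, map_sum]
  refine Finset.sum_congr rfl fun i _ => ?_
  rw [← map_smul, ← Pi.single_smul, smul_eq_mul, mul_one]

theorem hasLineDerivAt_add_mul_comp {n : ℕ} {E : Type*} [NormedAddCommGroup E] [NormedSpace ℝ E]
    {F G : ℝ → ℝ} {U : E → ℝ} {w : (Fin n → ℝ) → E} {p v : Fin n → ℝ} {i : Fin n}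
    (hF : DifferentiableAt ℝ F (p i)) (hG : DifferentiableAt ℝ G (p i))
    (hU : DifferentiableAt ℝ U (w p)) (hw : HasLineDerivAt ℝ w 0 p v) :
    HasLineDerivAt ℝ (fun q => F (q i) + G (q i) * U (w q))
      (v i * deriv F (p i) + v i * deriv G (p i) * U (w p)) p v := by
  rw [HasLineDerivAt]
  have hline : HasDerivAt (fun s : ℝ => (p + s • v) i) (v i) 0 := by
    simpa using (hasDerivAt_mul_const (v i)).const_add (p i)
  have hp : (p + (0 : ℝ) • v) i = p i := by simp
  have hwp : w (p + (0 : ℝ) • v) = w p := by simp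
  have hUw := hU.hasFDerivAt.comp_hasDerivAt_of_eq 0 hw hwp.symm
  refine ((hF.hasDerivAt.comp_of_eq 0 hline hp.symm).add
    ((hG.hasDerivAt.comp_of_eq 0 hline hp.symm).mul hUw)).congr_deriv ?_
  simp only [Function.comp_apply, hp, hwp, map_zero]
  ring

def bianchiCKV (c α₁ α β γ : ℝ) (p : Fin 4 → ℝ) : Fin 4 → ℝ := ![c, p 1 + α, α₁ * p 2 + β, γ]

def bianchiInvariants (c α₁ α β γ : ℝ) (p : Fin 4 → ℝ) : Fin 3 → ℝ :=
  ![(p 1 + α) * exp (-(p 0) / c), (p 2 + β / α₁) * exp (-(α₁ * p 0) / c), p 3 - (γ / c) * p 0]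

def conformalFactor (c : ℝ) (C : ℝ → ℝ) (t : ℝ) : ℝ := c * deriv C t / C t

def bianchiLaplacianTime (c α₁ : ℝ) (C f : ℝ → ℝ) (t : ℝ) : ℝ :=
  -((C t) ^ 2)⁻¹ * (deriv (deriv f) t + (2 * deriv C t / C t - (1 + α₁) / c) * deriv f t)

def potentialTimePart (c α₁ : ℝ) (C : ℝ → ℝ) (t : ℝ) : ℝ :=
  (c * deriv (deriv C) t - (α₁ + 1) * deriv C t) / (c * (C t) ^ 3)

theorem differentiable_bianchiInvariants (c α₁ α β γ : ℝ) :
    Differentiable ℝ (bianchiInvariants c α₁ α β γ) := by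
  rw [differentiable_pi]
  intro i
  fin_cases i <;> simp only [bianchiInvariants] <;> simp <;> fun_prop

theorem hasDerivAt_mul_exp_along_ckv {c k : ℝ} (hc : c ≠ 0) (hk : k ≠ 0) (t y b : ℝ) :
    HasDerivAt (fun s => (y + s * (k * y + b) + b / k) * exp (-(k * (t + s * c)) / c)) 0 0 := by
  have hlin := ((hasDerivAt_mul_const (x := 0) (k * y + b)).const_add y).add_const (b / k)
  have hexp :=
    ((((hasDerivAt_mul_const (x := 0) c).const_add t).const_mul k).fun_neg.div_const c).exp
  refine (hlin.mul hexp).congr_deriv ?_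
  field_simp
  ring

theorem hasDerivAt_sub_along_ckv {c : ℝ} (hc : c ≠ 0) (t z γ : ℝ) :
    HasDerivAt (fun s => z + s * γ - γ / c * (t + s * c)) 0 0 := by
  refine (((hasDerivAt_mul_const (x := 0) γ).const_add z).sub
    (((hasDerivAt_mul_const c).const_add t).const_mul (γ / c))).congr_deriv ?_
  field_simp
  ring

theorem hasLineDerivAt_bianchiInvariants_ckv {c α₁ : ℝ} (α β γ : ℝ) (hc : c ≠ 0) (hα₁ : α₁ ≠ 0)
    (p : Fin 4 → ℝ) :
    HasLineDerivAt ℝ (bianchiInvariants c α₁ α β γ) 0 p (bianchiCKV c α₁ α β γ p) := by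
  rw [HasLineDerivAt, hasDerivAt_pi]
  intro i
  fin_cases i <;>
    simp only [bianchiInvariants, bianchiCKV, Pi.add_apply, Pi.smul_apply, smul_eq_mul,
      Matrix.cons_val, Fin.zero_eta, Fin.mk_one, Fin.reduceFinMk]
  · simpa using hasDerivAt_mul_exp_along_ckv hc one_ne_zero (p 0) (p 1) α
  · exact hasDerivAt_mul_exp_along_ckv hc hα₁ (p 0) (p 2) β
  · exact hasDerivAt_sub_along_ckv hc (p 0) (p 3) γ

theorem fderiv_apply_bianchiCKV (c α₁ α β γ : ℝ) (f : (Fin 4 → ℝ) → ℝ) (p : Fin 4 → ℝ) :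
    fderiv ℝ f p (bianchiCKV c α₁ α β γ p)
      = c * pd 0 f p + (p 1 + α) * pd 1 f p + (α₁ * p 2 + β) * pd 2 f p + γ * pd 3 f p := by
  rw [← ContinuousLinearMap.sum_smul_apply_single, Fin.sum_univ_four]
  rfl

section TimePart

variable {c α₁ : ℝ} {C : ℝ → ℝ}

theorem hasDerivAt_conformalFactor (hC₁ : Differentiable ℝ C) (hC₂ : Differentiable ℝ (deriv C))
    (hC0 : ∀ t, C t ≠ 0) (t : ℝ) :
    HasDerivAt (conformalFactor c C)
      (c * (deriv (deriv C) t * C t - deriv C t ^ 2) / C t ^ 2) t := by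
  refine (((hC₂ t).hasDerivAt.const_mul c).div (hC₁ t).hasDerivAt (hC0 t)).congr_deriv ?_
  ring

theorem differentiable_potentialTimePart (hc : c ≠ 0) (hC : ContDiff ℝ 3 C)
    (hC0 : ∀ t, C t ≠ 0) : Differentiable ℝ (potentialTimePart c α₁ C) := by
  have hC₂ : Differentiable ℝ (deriv C) := by fun_prop (disch := norm_num)
  have hC₃ : Differentiable ℝ (deriv (deriv C)) := by fun_prop (disch := norm_num)
  unfold potentialTimePart
  fun_prop (disch := simp [hc, hC0])

theorem ckv_constraint_inv_sq {t : ℝ} (hC : DifferentiableAt ℝ C t) (hC0 : C t ≠ 0) :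
    c * deriv (fun t => (C t ^ 2)⁻¹) t + 2 * conformalFactor c C t * (C t ^ 2)⁻¹ = 0 := by
  have hG : HasDerivAt (fun t => (C t ^ 2)⁻¹) _ t :=
    (hC.hasDerivAt.pow 2).inv (pow_ne_zero 2 hC0)
  rw [hG.deriv, conformalFactor]
  simp only [Pi.pow_apply]
  field_simp
  ring

theorem ckv_constraint_potentialTimePart (hc : c ≠ 0) (hC : ContDiff ℝ 3 C) (hC0 : ∀ t, C t ≠ 0)
    (t : ℝ) :
    c * deriv (potentialTimePart c α₁ C) t
      + 2 * conformalFactor c C t * potentialTimePart c α₁ C t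
      + bianchiLaplacianTime c α₁ C (conformalFactor c C) t = 0 := by
  have hC₁ : Differentiable ℝ C := hC.differentiable (by norm_num)
  have hC₂ : Differentiable ℝ (deriv C) := by fun_prop (disch := norm_num)
  have hC₃ : Differentiable ℝ (deriv (deriv C)) := by fun_prop (disch := norm_num)
  have hψ' : deriv (conformalFactor c C)
      = fun t => c * (deriv (deriv C) t * C t - deriv C t ^ 2) / C t ^ 2 :=
    funext fun t => (hasDerivAt_conformalFactor hC₁ hC₂ hC0 t).deriv
  have hψ'' : HasDerivAt (fun t => c * (deriv (deriv C) t * C t - deriv C t ^ 2) / C t ^ 2) _ t :=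
    ((((hC₃ t).hasDerivAt.mul (hC₁ t).hasDerivAt).sub ((hC₂ t).hasDerivAt.pow 2)).const_mul c).div
      ((hC₁ t).hasDerivAt.pow 2) (pow_ne_zero 2 (hC0 t))
  have hF : HasDerivAt (potentialTimePart c α₁ C) _ t :=
    (((hC₃ t).hasDerivAt.const_mul c).sub ((hC₂ t).hasDerivAt.const_mul (α₁ + 1))).div
      (((hC₁ t).hasDerivAt.pow 3).const_mul c) (mul_ne_zero hc (pow_ne_zero 3 (hC0 t)))
  rw [bianchiLaplacianTime, hψ', hψ''.deriv, hF.deriv, potentialTimePart, conformalFactor]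
  simp only [Pi.pow_apply, Pi.mul_apply, Pi.sub_apply]
  have := hC0 t
  field_simp
  ring

end TimePart

/-- for the Bianchi I metric `diag(−C², C²e^{−2t/c}, C²e^{−2α₁t/c}, C²)`,
the CKV `ξ = X₁ + α∂_x + β∂_y + γ∂_z = (c, x+α, α₁y+β, γ)` with conformal factor
`ψ = cC′/C` and the potential
`V = (cC″ − (α₁+1)C′)/(cC³) + C^{−2}·U((x+α)e^{−t/c}, (y+β/α₁)e^{−α₁t/c}, z−(γ/c)t)`,
the Lie/Noether symmetry constraint `ξ^ν ∂_ν V + 2ψV + Δψ = 0` holds. -/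
theorem bianchiI_X1_plus_KVs_potential_constraint (c α₁ α β γ : ℝ)
    (hc : c ≠ 0) (hα₁ : α₁ ≠ 0)
    (C : ℝ → ℝ) (hC : ContDiff ℝ 3 C) (hC0 : ∀ t, C t ≠ 0)
    (U : (Fin 3 → ℝ) → ℝ) (hU : Differentiable ℝ U)
    (ψ : ℝ → ℝ) (hψ : ψ = fun t => c * deriv C t / C t)
    (Δψ : ℝ → ℝ)
    (hΔψ : Δψ = fun t => -((C t) ^ 2)⁻¹ *
      (deriv (deriv ψ) t + (2 * deriv C t / C t - (1 + α₁) / c) * deriv ψ t))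
    (V : (Fin 4 → ℝ) → ℝ)
    (hV : V = fun p =>
      (c * deriv (deriv C) (p 0) - (α₁ + 1) * deriv C (p 0)) / (c * (C (p 0)) ^ 3)
      + ((C (p 0)) ^ 2)⁻¹ *
          U ![(p 1 + α) * Real.exp (-(p 0) / c),
              (p 2 + β / α₁) * Real.exp (-(α₁ * p 0) / c),
              p 3 - (γ / c) * p 0]) :
    ∀ p : Fin 4 → ℝ,
      c * pd 0 V p + (p 1 + α) * pd 1 V p + (α₁ * p 2 + β) * pd 2 V p + γ * pd 3 V p
        + 2 * ψ (p 0) * V p + Δψ (p 0) = 0 := by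
  intro p
  replace hψ : ψ = conformalFactor c C := hψ
  replace hΔψ : Δψ = bianchiLaplacianTime c α₁ C ψ := hΔψ
  replace hV : V = fun q => potentialTimePart c α₁ C (q 0)
      + (C (q 0) ^ 2)⁻¹ * U (bianchiInvariants c α₁ α β γ q) := hV
  subst hψ hΔψ
  have hC₁ : Differentiable ℝ C := hC.differentiable (by norm_num)
  have hF := differentiable_potentialTimePart (α₁ := α₁) hc hC hC0
  have hG : Differentiable ℝ fun t => (C t ^ 2)⁻¹ := by fun_prop (disch := simp [hC0])
  have hVdiff : Differentiable ℝ V := by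
    have hw := differentiable_bianchiInvariants c α₁ α β γ
    rw [hV]
    fun_prop (disch := simp [hC0])
  have hline : HasLineDerivAt ℝ V _ p _ := hV ▸ hasLineDerivAt_add_mul_comp (i := 0)
    (hF _) (hG _) (hU _) (hasLineDerivAt_bianchiInvariants_ckv α β γ hc hα₁ p)
  rw [← fderiv_apply_bianchiCKV, (hVdiff p).hasFDerivAt.hasLineDerivAt _ |>.unique hline, hV]
  simp only [bianchiCKV, Matrix.cons_val_zero]
  linear_combination ckv_constraint_potentialTimePart (α₁ := α₁) hc hC hC0 (p 0)
    + U (bianchiInvariants c α₁ α β γ p) * ckv_constraint_inv_sq (c := c) (hC₁ (p 0)) (hC0 (p 0))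
end
end

section
/- Let m, λ be real constants with m ≠ 0, let A : ℝ → ℝ be three times differentiable with A(t) ≠ 0 for all t, and let U : ℝ³ → ℝ be differentiable. On ℝ⁴ with coordinates (t,x,y,z), consider the Bianchi III metric diag(−A²e^{mλt}, A²e^{mλt}, A²e^{m(λ−1)t}, A²e^{−2x}), the conformal Killing vector ξ = (2/m, 0, y, λz) with conformal factor ψ(t) = (2/m)·A′(t)/A(t) + λ, and the potential V(t,x,y,z) = (e^{−mλt}/A(t)²)·U(x, y·e^{−mt/2}, z·e^{−mλt/2}) + e^{−mλt}·(m(λ−1)·A′(t) + 2A″(t))/(2A(t)³). Then the Lie/Noether symmetry constraint of the Klein–Gordon equation holds identically: for all (t,x,y,z), (2/m)·∂_tV + y·∂_yV + λz·∂_zV + 2ψ·V + Δψ = 0, where Δψ(t) = −(e^{−mλt}/A(t)²)·[ψ″(t) + (2A′(t)/A(t) + m(λ−1)/2)·ψ′(t)] is the Laplace–Beltrami operator of the metric applied to ψ. -/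
/-!
Along the integral curves of `ξ = (2/m)∂_t + y∂_y + λz∂_z` the quantities `x`, `y e^{-mt/2}` and
`z e^{-mλt/2}` are constant, so differentiating `V` along `ξ` only differentiates its explicit
`t`-dependence. The weight `e^{-mλt}/A²` satisfies `ξ(e^{-mλt}/A²) = -2ψ e^{-mλt}/A²`, which
cancels the `U`-term of `2ψV`; what remains is the `U`-free part of the constraint, an identity
between `A`, `A'`, `A''` and `A'''`.
-/

noncomputable section

open Real

theorem fderiv_apply_eq_sum_pd (f : (Fin 4 → ℝ) → ℝ) (p v : Fin 4 → ℝ) :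
    fderiv ℝ f p v = ∑ μ, v μ * pd μ f p := by
  conv_lhs => rw [pi_eq_sum_univ' v]
  simp [pd]

theorem ContDiff.differentiable_deriv_deriv_of_three {A : ℝ → ℝ} (hA : ContDiff ℝ 3 A) :
    Differentiable ℝ A ∧ Differentiable ℝ (deriv A) ∧ Differentiable ℝ (deriv (deriv A)) :=
  ⟨hA.differentiable (by norm_num), (hA.iterate_deriv' 2 1).differentiable (by norm_num),
    (hA.iterate_deriv' 1 2).differentiable (by norm_num)⟩

theorem hasDerivAt_exp_neg_mul (c t : ℝ) :
    HasDerivAt (fun s => exp (-(c * s))) (exp (-(c * t)) * -c) t := by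
  simpa using ((hasDerivAt_id t).const_mul c).neg.exp

namespace BianchiIII

variable (m lam : ℝ) (A : ℝ → ℝ)

def ckvFlow (p : Fin 4 → ℝ) (s : ℝ) : Fin 4 → ℝ :=
  ![p 0 + 2 / m * s, p 1, p 2 * exp s, p 3 * exp (lam * s)]

def ckvInvariants (q : Fin 4 → ℝ) : Fin 3 → ℝ :=
  ![q 1, q 2 * exp (-(m * q 0) / 2), q 3 * exp (-(m * lam * q 0) / 2)]

def conformalFactor (t : ℝ) : ℝ :=
  2 / m * deriv A t / A t + lam

def laplacianConformalFactor (t : ℝ) : ℝ :=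
  -(exp (-(m * lam * t)) / A t ^ 2) * (deriv (deriv (conformalFactor m lam A)) t
    + (2 * deriv A t / A t + m * (lam - 1) / 2) * deriv (conformalFactor m lam A) t)

def potentialWeight (t : ℝ) : ℝ :=
  exp (-(m * lam * t)) / A t ^ 2

def potentialOffset (t : ℝ) : ℝ :=
  exp (-(m * lam * t)) * (m * (lam - 1) * deriv A t + 2 * deriv (deriv A) t) / (2 * A t ^ 3)

def potential (U : (Fin 3 → ℝ) → ℝ) (q : Fin 4 → ℝ) : ℝ :=
  potentialWeight m lam A (q 0) * U (ckvInvariants m lam q) + potentialOffset m lam A (q 0)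

variable {m lam A}

theorem ckvFlow_zero (p : Fin 4 → ℝ) : ckvFlow m lam p 0 = p := by
  ext i
  fin_cases i <;> simp [ckvFlow]

theorem hasDerivAt_ckvFlow (p : Fin 4 → ℝ) :
    HasDerivAt (ckvFlow m lam p) ![2 / m, 0, p 2, lam * p 3] 0 := by
  rw [hasDerivAt_pi]
  intro i
  fin_cases i <;> simp only [ckvFlow, Fin.isValue]
  · simpa using ((hasDerivAt_id (0 : ℝ)).const_mul (2 / m)).const_add (p 0)
  · exact hasDerivAt_const _ _
  · simpa using (hasDerivAt_exp 0).const_mul (p 2)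
  · simpa [mul_comm] using (((hasDerivAt_id (0 : ℝ)).const_mul lam).exp).const_mul (p 3)

theorem ckvInvariants_ckvFlow (hm : m ≠ 0) (p : Fin 4 → ℝ) (s : ℝ) :
    ckvInvariants m lam (ckvFlow m lam p s) = ckvInvariants m lam p := by
  have hy : p 2 * exp s * exp (-(m * (p 0 + 2 / m * s)) / 2) = p 2 * exp (-(m * p 0) / 2) := by
    rw [mul_assoc, ← exp_add]; congr 2; field_simp; ring
  have hz : p 3 * exp (lam * s) * exp (-(m * lam * (p 0 + 2 / m * s)) / 2)
      = p 3 * exp (-(m * lam * p 0) / 2) := by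
    rw [mul_assoc, ← exp_add]; congr 2; field_simp; ring
  simp [ckvInvariants, ckvFlow, hy, hz]

theorem differentiable_ckvInvariants : Differentiable ℝ (ckvInvariants m lam) := by
  rw [differentiable_pi]
  intro i
  fin_cases i <;> simp [ckvInvariants] <;> fun_prop

theorem differentiable_potentialWeight (hA : Differentiable ℝ A) (hA0 : ∀ t, A t ≠ 0) :
    Differentiable ℝ (potentialWeight m lam A) := by
  unfold potentialWeight
  fun_prop (disch := simp [hA0])

theorem differentiable_potentialOffset (hA : ContDiff ℝ 3 A) (hA0 : ∀ t, A t ≠ 0) :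
    Differentiable ℝ (potentialOffset m lam A) := by
  obtain ⟨h1, h2, h3⟩ := hA.differentiable_deriv_deriv_of_three
  unfold potentialOffset
  fun_prop (disch := simp [hA0])

theorem differentiable_potential (hA : ContDiff ℝ 3 A) (hA0 : ∀ t, A t ≠ 0)
    {U : (Fin 3 → ℝ) → ℝ} (hU : Differentiable ℝ U) :
    Differentiable ℝ (potential m lam A U) := by
  have hW := differentiable_potentialWeight (m := m) (lam := lam)
    (hA.differentiable (by norm_num)) hA0
  have hO := differentiable_potentialOffset (m := m) (lam := lam) hA hA0
  have hI := differentiable_ckvInvariants (m := m) (lam := lam)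
  unfold potential
  fun_prop

theorem two_div_mul_deriv_potentialWeight (hm : m ≠ 0) {t : ℝ} (hA : DifferentiableAt ℝ A t)
    (hA0 : A t ≠ 0) :
    2 / m * deriv (potentialWeight m lam A) t
      = -(2 * conformalFactor m lam A t * potentialWeight m lam A t) := by
  have hW : HasDerivAt (potentialWeight m lam A) _ t :=
    (hasDerivAt_exp_neg_mul (m * lam) t).fun_div (hA.hasDerivAt.fun_pow 2) (pow_ne_zero 2 hA0)
  rw [hW.deriv]
  simp only [potentialWeight, conformalFactor]
  field_simp
  ring

theorem potentialOffset_constraint (hm : m ≠ 0) (hA : ContDiff ℝ 3 A) (hA0 : ∀ t, A t ≠ 0)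
    (t : ℝ) :
    2 / m * deriv (potentialOffset m lam A) t
      + 2 * conformalFactor m lam A t * potentialOffset m lam A t
      + laplacianConformalFactor m lam A t = 0 := by
  obtain ⟨h1, h2, h3⟩ := hA.differentiable_deriv_deriv_of_three
  have hOffset : HasDerivAt (potentialOffset m lam A) _ t :=
    ((hasDerivAt_exp_neg_mul (m * lam) t).fun_mul
      (((h2 t).hasDerivAt.const_mul (m * (lam - 1))).fun_add
        ((h3 t).hasDerivAt.const_mul 2))).fun_div
      (((h1 t).hasDerivAt.fun_pow 3).const_mul 2)
      (mul_ne_zero two_ne_zero (pow_ne_zero 3 (hA0 t)))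
  have hψ : deriv (conformalFactor m lam A)
      = fun s => (2 / m * deriv (deriv A) s * A s - 2 / m * deriv A s * deriv A s) / A s ^ 2 := by
    funext s
    exact ((((h2 s).hasDerivAt.const_mul (2 / m)).fun_div (h1 s).hasDerivAt (hA0 s)).add_const
      lam).deriv
  have hψ' := ((((h3 t).hasDerivAt.const_mul (2 / m)).fun_mul (h1 t).hasDerivAt).fun_sub
    (((h2 t).hasDerivAt.const_mul (2 / m)).fun_mul (h2 t).hasDerivAt)).fun_div
    ((h1 t).hasDerivAt.fun_pow 2) (pow_ne_zero 2 (hA0 t))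
  rw [laplacianConformalFactor, hOffset.deriv, hψ, hψ'.deriv]
  simp only [potentialOffset, conformalFactor]
  have := hA0 t
  field_simp
  ring

theorem ckv_derivative_potential (hm : m ≠ 0) (hA : ContDiff ℝ 3 A) (hA0 : ∀ t, A t ≠ 0)
    {U : (Fin 3 → ℝ) → ℝ} (hU : Differentiable ℝ U) (p : Fin 4 → ℝ) :
    2 / m * pd 0 (potential m lam A U) p + p 2 * pd 2 (potential m lam A U) p
        + lam * p 3 * pd 3 (potential m lam A U) p
      = 2 / m * (deriv (potentialWeight m lam A) (p 0) * U (ckvInvariants m lam p)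
        + deriv (potentialOffset m lam A) (p 0)) := by
  have hAlongFlow : HasDerivAt (potential m lam A U ∘ ckvFlow m lam p)
      (fderiv ℝ (potential m lam A U) p ![2 / m, 0, p 2, lam * p 3]) 0 :=
    (differentiable_potential hA hA0 hU p).hasFDerivAt.comp_hasDerivAt_of_eq 0
      (hasDerivAt_ckvFlow p) (ckvFlow_zero p).symm
  have hTimeOnly : potential m lam A U ∘ ckvFlow m lam p
      = (fun t => potentialWeight m lam A t * U (ckvInvariants m lam p)
          + potentialOffset m lam A t) ∘ fun s => p 0 + 2 / m * s := by
    funext s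
    simp only [Function.comp, potential, ckvInvariants_ckvFlow hm]
    rfl
  have hW := differentiable_potentialWeight (m := m) (lam := lam)
    (hA.differentiable (by norm_num)) hA0 (p 0)
  have hO := differentiable_potentialOffset (m := m) (lam := lam) hA hA0 (p 0)
  have hTime := ((hW.hasDerivAt.mul_const (U (ckvInvariants m lam p))).add
    hO.hasDerivAt).comp_of_eq 0 (((hasDerivAt_id (0 : ℝ)).const_mul (2 / m)).const_add (p 0))
    (by simp)
  rw [hTimeOnly] at hAlongFlow
  have h := hAlongFlow.unique hTime
  rw [fderiv_apply_eq_sum_pd, Fin.sum_univ_four] at h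
  simp only [Matrix.cons_val] at h
  linear_combination h

end BianchiIII

/-- STATEMENT: for the Bianchi III metric, the CKV `ξ = (2/m)∂_t + y∂_y + λz∂_z` with
conformal factor `ψ = (2/m)A′/A + λ` and the potential
`V = (e^{−mλt}/A²)·U(x, ye^{−mt/2}, ze^{−mλt/2}) + e^{−mλt}(m(λ−1)A′ + 2A″)/(2A³)`,
the Lie/Noether symmetry constraint `ξ^ν ∂_ν V + 2ψV + Δψ = 0` of the Klein-Gordon
equation holds. -/
theorem bianchiIII_X3_potential_constraint (m lam : ℝ) (hm : m ≠ 0)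
    (A : ℝ → ℝ) (hA : ContDiff ℝ 3 A) (hA0 : ∀ t, A t ≠ 0)
    (U : (Fin 3 → ℝ) → ℝ) (hU : Differentiable ℝ U)
    (ψ : ℝ → ℝ) (hψ : ψ = fun t => (2 / m) * deriv A t / A t + lam)
    (Δψ : ℝ → ℝ)
    (hΔψ : Δψ = fun t => -(Real.exp (-(m * lam * t)) / (A t) ^ 2) *
      (deriv (deriv ψ) t + (2 * deriv A t / A t + m * (lam - 1) / 2) * deriv ψ t))
    (V : (Fin 4 → ℝ) → ℝ)
    (hV : V = fun p =>
      (Real.exp (-(m * lam * p 0)) / (A (p 0)) ^ 2) *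
        U ![p 1, p 2 * Real.exp (-(m * p 0) / 2), p 3 * Real.exp (-(m * lam * p 0) / 2)]
      + Real.exp (-(m * lam * p 0)) *
          (m * (lam - 1) * deriv A (p 0) + 2 * deriv (deriv A) (p 0)) /
          (2 * (A (p 0)) ^ 3)) :
    ∀ p : Fin 4 → ℝ,
      (2 / m) * pd 0 V p + p 2 * pd 2 V p + lam * p 3 * pd 3 V p
        + 2 * ψ (p 0) * V p + Δψ (p 0) = 0 := by
  intro p
  obtain rfl : ψ = BianchiIII.conformalFactor m lam A := hψ
  obtain rfl : Δψ = BianchiIII.laplacianConformalFactor m lam A := hΔψ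
  obtain rfl : V = BianchiIII.potential m lam A U := hV
  rw [BianchiIII.ckv_derivative_potential hm hA hA0 hU p]
  have hWeight := BianchiIII.two_div_mul_deriv_potentialWeight (lam := lam) hm
    (hA.differentiable (by norm_num) (p 0)) (hA0 (p 0))
  have hOffset := BianchiIII.potentialOffset_constraint (lam := lam) hm hA hA0 (p 0)
  simp only [BianchiIII.potential]
  linear_combination U (BianchiIII.ckvInvariants m lam p) * hWeight + hOffset
end
end
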